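/- Let N ≥ 2 and 1 ≤ n ≤ N+1, and let p_1,…,p_n be the first n fundamental points of P^N, i.e., p_j is the point whose j-th homogeneous coordinate is 1 and all others are 0. Then the radical ideal I = ∩_{j=1}^n m_{p_j} ⊆ k[P^N] satisfies I^(Nr) ⊆ M^{(N-1)r}·I^r for all integers r ≥ 1. -/

import Mathlib

open MvPolynomial Filter

/-- The homogeneous ideal of all forms vanishing at the (projective) point with
coordinate vector `p`. -/
noncomputable def pointIdeal {k : Type*} [Field k] {σ : Type*} (p : σ → k) :
    Ideal (MvPolynomial σ k) :=
  Ideal.span { f | (∃ d, f.IsHomogeneous d) ∧ eval p f = 0 }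

/-- The fat points ideal `⋂ⱼ m_{pⱼ}^{mⱼ}` (natural multiplicities). -/
noncomputable def fatIdeal {k : Type*} [Field k] {N n : ℕ} (p : Fin n → (Fin (N + 1) → k))
    (m : Fin n → ℕ) : Ideal (MvPolynomial (Fin (N + 1)) k) :=
  ⨅ j, pointIdeal (p j) ^ (m j)

/-- The fat points ideal with integer multiplicities, with the convention
`m_p^m = (1)` for `m ≤ 0`. -/
noncomputable def fatIdealZ {k : Type*} [Field k] {N n : ℕ} (p : Fin n → (Fin (N + 1) → k))
    (m : Fin n → ℤ) : Ideal (MvPolynomial (Fin (N + 1)) k) :=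
  ⨅ j, pointIdeal (p j) ^ (m j).toNat

/-- The irrelevant maximal ideal `M = (x_0, …, x_N)`. -/
noncomputable def maxIdeal (k : Type*) [Field k] (N : ℕ) : Ideal (MvPolynomial (Fin (N + 1)) k) :=
  Ideal.span (Set.range X)

/-- `α(I)`: the least `t ≥ 0` such that `I` contains a nonzero form of degree `t`. -/
noncomputable def alpha {k : Type*} [Field k] {σ : Type*}
    (I : Ideal (MvPolynomial σ k)) : ℕ :=
  sInf { t | ∃ f ∈ I, f ≠ 0 ∧ f.IsHomogeneous t }

/-- The sequence `t ↦ α(I^{(t)})/t` attached to the fat points ideal with points `p`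
and multiplicities `m`; its limit as `t → ∞` is the Waldschmidt constant `γ`. -/
noncomputable def alphaSeq {k : Type*} [Field k] {N n : ℕ}
    (p : Fin n → (Fin (N + 1) → k)) (m : Fin n → ℕ) (t : ℕ) : ℝ :=
  (alpha (fatIdeal p fun j => t * m j) : ℝ) / t

/-- `P` holds for `n`-tuples of points of `P^N` in general position: there is a
nonempty Zariski-open subset (the complement of the zero locus of a set `S` of
polynomials in the coordinates of the tuple) of tuples of nonzero coordinate
vectors on which `P` holds. -/
def Generic (k : Type*) [Field k] (N n : ℕ)
    (P : (Fin n → (Fin (N + 1) → k)) → Prop) : Prop :=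
  ∃ S : Set (MvPolynomial (Fin n × Fin (N + 1)) k),
    (∃ p : Fin n → (Fin (N + 1) → k), (∀ j, p j ≠ 0) ∧
      ∃ f ∈ S, eval (fun q => p q.1 q.2) f ≠ 0) ∧
    ∀ p : Fin n → (Fin (N + 1) → k), (∀ j, p j ≠ 0) →
      (∃ f ∈ S, eval (fun q => p q.1 q.2) f ≠ 0) → P p


/-!
Every ideal in sight is a monomial ideal, so it suffices to treat a single monomial `X^x` of
`f ∈ I^(Nr)`. Membership in `m_{eᵢ}^{Nr}` says that `X^x` has degree at least `Nr` in the
variables other than `xᵢ`. The ideal `I` contains every `x_l` with `l ≥ n` and every product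
`x_a x_b` with `a ≠ b`; choosing `r` such generators greedily (two largest exponents at a time)
yields a divisor of `X^x` in `I^r`, and summing the `n ≤ N + 1` degree bounds shows that its
cofactor has degree at least `(N - 1) r`, i.e. lies in `M^((N-1)r)`.
-/

section Monomials

variable {σ R : Type*} [CommSemiring R]

theorem MvPolynomial.monomial_one_mem_pow_degree {J : Ideal (MvPolynomial σ R)} {y : σ →₀ ℕ}
    (hy : ∀ l ∈ y.support, X l ∈ J) : monomial y (1 : R) ∈ J ^ y.degree := by
  rw [monomial_eq, C_1, one_mul, Finsupp.prod, Finsupp.degree_apply,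
    ← Finset.prod_pow_eq_pow_sum]
  exact Ideal.prod_mem_prod fun l hl => Ideal.pow_mem_pow (hy l hl) _

theorem MvPolynomial.span_X_ne_pow_le (i : σ) (m : ℕ) :
    Ideal.span (X '' {l | l ≠ i}) ^ m ≤
      Ideal.span ((fun s => monomial s (1 : R)) '' {s | m + s i ≤ s.degree}) := by
  induction m with
  | zero =>
    rw [pow_zero, Ideal.one_eq_top, top_le_iff, Ideal.eq_top_iff_one]
    exact Ideal.subset_span ⟨0, by simp, by simp⟩
  | succ m ih =>
    have hX : X '' {l | l ≠ i} ⊆ (fun s => monomial s (1 : R)) '' {s | 1 + s i ≤ s.degree} := by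
      rintro _ ⟨l, hl, rfl⟩
      exact ⟨Finsupp.single l 1, by simp [Ne.symm hl], rfl⟩
    rw [pow_succ]
    refine (Ideal.mul_mono ih (Ideal.span_mono hX)).trans ?_
    rw [Ideal.span_mul_span']
    refine Ideal.span_mono ?_
    rintro _ ⟨_, ⟨s, hs, rfl⟩, _, ⟨u, hu, rfl⟩, rfl⟩
    refine ⟨s + u, ?_, by simp [monomial_mul]⟩
    simp only [Set.mem_ofPred_eq, Finsupp.add_apply, map_add] at hs hu ⊢
    omega

end Monomials

section Pairs

variable {σ : Type*} [Fintype σ] [DecidableEq σ]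

open Finset in
theorem Finsupp.exists_ne_forall_three_mul_le_degree {x : σ →₀ ℕ} (hx0 : x ≠ 0)
    (hx : ∀ l, x l < x.degree) :
    ∃ a b, a ≠ b ∧ x a ≠ 0 ∧ x b ≠ 0 ∧ ∀ l, l ≠ a → l ≠ b → 3 * x l ≤ x.degree := by
  obtain ⟨l₀, -⟩ := DFunLike.ne_iff.1 hx0
  obtain ⟨a, -, ha⟩ := exists_max_image univ x ⟨l₀, mem_univ l₀⟩
  have hsplit : x a + ∑ l ∈ univ.erase a, x l = x.degree := by
    rw [degree_eq_sum, Finset.add_sum_erase _ _ (mem_univ a)]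
  have hrest : ∑ l ∈ univ.erase a, x l ≠ 0 := by have := hx a; omega
  obtain ⟨b, hb, hbmax⟩ := exists_max_image (univ.erase a) x (nonempty_of_sum_ne_zero hrest)
  have hxb : x b ≠ 0 := fun h0 => hrest (sum_eq_zero fun l hl => by have := hbmax l hl; omega)
  refine ⟨a, b, (ne_of_mem_erase hb).symm, by have := ha b (mem_univ b); omega, hxb,
    fun l hla hlb => ?_⟩
  have hpair : x b + x l ≤ ∑ l ∈ univ.erase a, x l := by
    rw [← sum_pair (Ne.symm hlb)]
    exact sum_le_sum_of_subset (by simp [insert_subset_iff, ne_of_mem_erase hb, hla])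
  have := ha l (mem_univ l)
  have := hbmax l (mem_erase.2 ⟨hla, mem_univ l⟩)
  omega

variable {R : Type*} [CommSemiring R]

theorem MvPolynomial.exists_le_monomial_one_mem_pow_of_X_mul_X_mem
    {J : Ideal (MvPolynomial σ R)} (hJ : ∀ a b, a ≠ b → X a * X b ∈ J) (t : ℕ) {x : σ →₀ ℕ}
    (h2t : 2 * t ≤ x.degree) (hx : ∀ l, x l + t ≤ x.degree) :
    ∃ y ≤ x, y.degree = 2 * t ∧ monomial y (1 : R) ∈ J ^ t := by
  induction t generalizing x with
  | zero => exact ⟨0, bot_le, map_zero _, by simp⟩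
  | succ t ih =>
    obtain ⟨a, b, hab, hxa, hxb, hthree⟩ :=
      Finsupp.exists_ne_forall_three_mul_le_degree (x := x) (by rintro rfl; simp at h2t)
        fun l => by have := hx l; omega
    set p : σ →₀ ℕ := Finsupp.single a 1 + Finsupp.single b 1 with hp
    have hp_apply : ∀ l, p l = (if a = l then 1 else 0) + (if b = l then 1 else 0) := fun l => by
      rw [hp, Finsupp.add_apply, Finsupp.single_apply, Finsupp.single_apply]
    have hpx : p ≤ x := Finsupp.le_def.2 fun l => by
      rw [hp_apply]
      split_ifs with hal hbl hbl <;> subst_vars <;> first | omega | exact absurd rfl hab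
    have hpdeg : p.degree = 2 := by rw [hp, map_add, Finsupp.degree_single, Finsupp.degree_single]
    have hdeg : (x - p).degree + 2 = x.degree := by
      rw [← hpdeg, ← map_add, tsub_add_cancel_of_le hpx]
    have hbound : ∀ l, (x - p) l + t ≤ (x - p).degree := fun l => by
      have := hx l
      rw [Finsupp.tsub_apply, hp_apply]
      by_cases hal : a = l
      · subst hal
        rw [if_pos rfl, if_neg hab.symm]
        omega
      by_cases hbl : b = l
      · subst hbl
        rw [if_neg hal, if_pos rfl]
        omega
      have := hthree l (Ne.symm hal) (Ne.symm hbl)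
      rw [if_neg hal, if_neg hbl]
      omega
    obtain ⟨y, hyx, hy, hyJ⟩ := ih (x := x - p) (by omega) hbound
    refine ⟨y + p, ?_, by rw [map_add, hy, hpdeg]; ring, ?_⟩
    · calc y + p ≤ x - p + p := by gcongr
        _ = x := tsub_add_cancel_of_le hpx
    · have hmon : monomial (y + p) (1 : R) = monomial y 1 * (X a * X b) := by
        simp only [hp, X, monomial_mul, mul_one]
      rw [hmon, pow_succ]
      exact Ideal.mul_mem_mul hyJ (hJ a b hab)

end Pairs




open Finset in
theorem Finsupp.card_mul_add_degree_filter_le {σ : Type*} [Fintype σ] [DecidableEq σ]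
    {s : Finset σ} {m : ℕ} {x : σ →₀ ℕ} (hx : ∀ l ∈ s, m + x l ≤ x.degree) :
    #s * m + (x.filter (· ∈ s)).degree ≤ #s * x.degree := by
  have hxin : (x.filter (· ∈ s)).degree = ∑ l ∈ s, x l := by
    simp [degree_eq_sum, filter_apply]
  calc #s * m + (x.filter (· ∈ s)).degree = ∑ l ∈ s, (m + x l) := by
        rw [hxin, sum_add_distrib, sum_const, smul_eq_mul]
    _ ≤ ∑ _ ∈ s, x.degree := Finset.sum_le_sum hx
    _ = #s * x.degree := by rw [sum_const, smul_eq_mul]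

open Finset in
theorem MvPolynomial.exists_le_monomial_one_mem_pow_of_mul_add_le_degree {σ R : Type*}
    [CommSemiring R] [Fintype σ] [DecidableEq σ]
    {N r : ℕ} (hN : 2 ≤ N) {s : Finset σ} (hs : s.Nonempty) (hsN : #s ≤ N + 1)
    {J : Ideal (MvPolynomial σ R)} (hJX : ∀ l ∉ s, X l ∈ J)
    (hJXX : ∀ a b, a ≠ b → X a * X b ∈ J) {x : σ →₀ ℕ}
    (hx : ∀ l ∈ s, N * r + x l ≤ x.degree) :
    ∃ y ≤ x, (N - 1) * r + y.degree ≤ x.degree ∧ monomial y (1 : R) ∈ J ^ r := by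
  set xin := x.filter (· ∈ s)
  set xout := x.filter (· ∉ s)
  have hsplit : xin + xout = x := Finsupp.filter_add_filter_not x _
  have hdeg : xin.degree + xout.degree = x.degree := by rw [← map_add, hsplit]
  have hxin_apply : ∀ l, xin l = if l ∈ s then x l else 0 := fun l => Finsupp.filter_apply _ _ _
  have hout : ∀ l ∈ xout.support, X l ∈ J := fun l hl => by
    rw [Finsupp.support_filter, Finset.mem_filter] at hl
    exact hJX l hl.2
  have hNr : N * r ≤ x.degree := by
    obtain ⟨l, hl⟩ := hs
    have := hx l hl
    omega
  have hNr1 : (N - 1) * r + r = N * r := by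
    rw [← Nat.succ_mul, Nat.succ_eq_add_one, Nat.sub_add_cancel (by omega)]
  have hNr2 : 2 * r ≤ N * r := Nat.mul_le_mul_right r hN
  -- Take `r` variables outside `s` dividing `X^x` if there are that many; otherwise take all
  -- `xout.degree < r` of them and `r - xout.degree` products of two distinct variables.
  rcases le_or_gt r xout.degree with hr | hr
  · obtain ⟨y, hy, rfl⟩ := Finsupp.exists_le_degree_eq xout _ hr
    exact ⟨y, hy.trans (hsplit ▸ le_add_self), by omega,
      monomial_one_mem_pow_degree fun l hl => hout l (Finsupp.support_mono hy hl)⟩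
  have hkey : N * r + r ≤ x.degree + xout.degree := by
    have := Finsupp.card_mul_add_degree_filter_le hx
    have := hs.card_pos
    nlinarith
  obtain ⟨y, hyx, hy, hyJ⟩ :=
    MvPolynomial.exists_le_monomial_one_mem_pow_of_X_mul_X_mem hJXX (r - xout.degree) (x := xin)
      (by omega) fun l => by
        by_cases hl : l ∈ s
        · have := hx l hl
          rw [hxin_apply, if_pos hl]
          omega
        · rw [hxin_apply, if_neg hl]
          omega
  refine ⟨y + xout, hsplit ▸ add_le_add_left hyx _, by rw [map_add]; omega, ?_⟩
  have hmon : monomial (y + xout) (1 : R) = monomial y 1 * monomial xout 1 := by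
    rw [monomial_mul, mul_one]
  rw [hmon, ← Nat.sub_add_cancel hr.le, pow_add]
  exact Ideal.mul_mem_mul hyJ (monomial_one_mem_pow_degree hout)

section PointIdeal

variable {σ k : Type*} [Field k] [DecidableEq σ]

theorem X_mem_pointIdeal_single {i l : σ} (h : l ≠ i) : X l ∈ pointIdeal (Pi.single i (1 : k)) :=
  Ideal.subset_span ⟨⟨1, isHomogeneous_X _ _⟩, by rw [eval_X, Pi.single_eq_of_ne h]⟩

theorem pointIdeal_single_le_span_X (i : σ) :
    pointIdeal (Pi.single i (1 : k)) ≤ Ideal.span (X '' {l | l ≠ i}) := by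
  rw [pointIdeal, Ideal.span_le]
  rintro f ⟨⟨d, hf⟩, hev⟩
  -- Apart from its `xᵢ^d` term, `f` lies in the span; evaluating at `eᵢ` kills that term too.
  set c := coeff (Finsupp.single i d) f
  have hg : f - monomial (Finsupp.single i d) c ∈ Ideal.span (X '' {l | l ≠ i}) := by
    rw [mem_ideal_span_X_image]
    intro s hs
    rw [mem_support_iff, coeff_sub, coeff_monomial] at hs
    split_ifs at hs with h
    · simp [c, h] at hs
    by_contra! hzero
    rw [sub_zero] at hs
    have hsi : s = Finsupp.single i (s i) := Finsupp.support_subset_singleton.1 fun l hl => by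
      by_contra hli
      exact Finsupp.mem_support_iff.1 hl (hzero l (by simpa using hli))
    have hd : d = s i := by
      rw [hf.degree_eq_sum_deg_support (mem_support_iff.2 hs), ← Finsupp.degree_apply, hsi,
        Finsupp.degree_single, Finsupp.single_eq_same]
    exact h (hd ▸ hsi).symm
  have hvanish : Ideal.span (X '' {l | l ≠ i}) ≤ RingHom.ker (eval (Pi.single i (1 : k))) :=
    Ideal.span_le.2 <| by
      rintro _ ⟨l, hl, rfl⟩
      rw [SetLike.mem_coe, RingHom.mem_ker, eval_X, Pi.single_eq_of_ne hl]
  have hc : c = 0 := by simpa [hev, eval_monomial] using hvanish hg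
  simpa [hc] using hg

theorem add_le_degree_of_mem_pointIdeal_single_pow {i : σ} {m : ℕ} {f : MvPolynomial σ k}
    (hf : f ∈ pointIdeal (Pi.single i (1 : k)) ^ m)
    {x : σ →₀ ℕ} (hx : x ∈ f.support) : m + x i ≤ x.degree := by
  have hspan := span_X_ne_pow_le i m (Ideal.pow_right_mono (pointIdeal_single_le_span_X i) m hf)
  obtain ⟨s, hs : m + s i ≤ s.degree, hsx⟩ := mem_ideal_span_monomial_image.1 hspan x hx
  have hdeg : x.degree = s.degree + (x - s).degree := by
    rw [← map_add, add_tsub_cancel_of_le hsx]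
  have hi : x i = s i + (x - s) i := by rw [← Finsupp.add_apply, add_tsub_cancel_of_le hsx]
  have := Finsupp.le_degree i (x - s)
  omega

end PointIdeal

section FundamentalPoints

variable {k : Type*} [Field k] {N n : ℕ} {ι : Fin n → Fin (N + 1)}
  {e : Fin n → Fin (N + 1) → k}

theorem X_mem_fatIdeal_one (he : ∀ j, e j = Pi.single (ι j) 1) {l : Fin (N + 1)}
    (hl : l ∉ Set.range ι) : X l ∈ fatIdeal e (fun _ => 1) :=
  Submodule.mem_iInf _ |>.2 fun j => by
    rw [pow_one, he j]
    exact X_mem_pointIdeal_single fun h => hl ⟨j, h.symm⟩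

theorem X_mul_X_mem_fatIdeal_one (he : ∀ j, e j = Pi.single (ι j) 1) {a b : Fin (N + 1)}
    (hab : a ≠ b) : X a * X b ∈ fatIdeal e (fun _ => 1) :=
  Submodule.mem_iInf _ |>.2 fun j => by
    rw [pow_one, he j]
    rcases eq_or_ne a (ι j) with rfl | ha
    · exact Ideal.mul_mem_left _ _ (X_mem_pointIdeal_single hab.symm)
    · exact Ideal.mul_mem_right _ _ (X_mem_pointIdeal_single ha)

theorem add_le_degree_of_mem_fatIdeal (he : ∀ j, e j = Pi.single (ι j) 1) {m : ℕ}
    {f : MvPolynomial (Fin (N + 1)) k} (hf : f ∈ fatIdeal e (fun _ => m))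
    {x : Fin (N + 1) →₀ ℕ} (hx : x ∈ f.support) (j : Fin n) : m + x (ι j) ≤ x.degree := by
  have hfj := Submodule.mem_iInf _ |>.1 hf j
  rw [he j] at hfj
  exact add_le_degree_of_mem_pointIdeal_single_pow hfj hx

end FundamentalPoints

theorem statement19_general (k : Type*) [Field k] (N n : ℕ)
    (hN : 2 ≤ N) (hn1 : 1 ≤ n) (hn2 : n ≤ N + 1)
    (e : Fin n → (Fin (N + 1) → k))
    (he : ∀ j, e j = Pi.single (Fin.castLE hn2 j) 1) :
    ∀ r : ℕ, 1 ≤ r →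
      fatIdeal e (fun _ => N * r) ≤
        maxIdeal k N ^ ((N - 1) * r) * (fatIdeal e (fun _ => 1)) ^ r := by
  intro r _ f hf
  set s := Finset.univ.image (Fin.castLE hn2)
  have hs : s.Nonempty := Finset.univ_nonempty_iff.2 ⟨⟨0, hn1⟩⟩ |>.image _
  rw [f.as_sum]
  refine Ideal.sum_mem _ fun x hx => ?_
  obtain ⟨y, hyx, hdeg, hy⟩ := exists_le_monomial_one_mem_pow_of_mul_add_le_degree hN hs
    (Finset.card_le_univ s |>.trans_eq (Fintype.card_fin _))
    (fun l hl => X_mem_fatIdeal_one he fun ⟨j, hj⟩ =>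
      hl (hj ▸ Finset.mem_image_of_mem _ (Finset.mem_univ j)))
    (fun a b hab => X_mul_X_mem_fatIdeal_one he hab)
    (Finset.forall_mem_image.2 fun j _ => add_le_degree_of_mem_fatIdeal he hf hx j)
  have hM : monomial (x - y) (1 : k) ∈ maxIdeal k N ^ ((N - 1) * r) := by
    refine Ideal.pow_le_pow_right ?_
      (monomial_one_mem_pow_degree fun l _ => Ideal.subset_span ⟨l, rfl⟩)
    have : (x - y).degree + y.degree = x.degree := by rw [← map_add, tsub_add_cancel_of_le hyx]
    omega
  rw [← mul_one (coeff x f), ← C_mul_monomial, ← tsub_add_cancel_of_le hyx, ← mul_one (1 : k),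
    ← monomial_mul]
  exact Ideal.mul_mem_left _ _ (Ideal.mul_mem_mul hM hy)

/-- Let `N ≥ 2` and `1 ≤ n ≤ N + 1`, and let `e₁, …, eₙ` be the first `n`
fundamental points of `ℙᴺ`. Then the radical ideal `I = ⋂ⱼ m_{eⱼ}` satisfies
`I^(Nr) ⊆ M^((N-1)r) * I^r` for all `r ≥ 1`. -/
theorem statement19 (k : Type*) [Field k] [CharZero k] (N n : ℕ)
    (hN : 2 ≤ N) (hn1 : 1 ≤ n) (hn2 : n ≤ N + 1)
    (e : Fin n → (Fin (N + 1) → k))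
    (he : ∀ j, e j = Pi.single (Fin.castLE hn2 j) 1) :
    ∀ r : ℕ, 1 ≤ r →
      fatIdeal e (fun _ => N * r) ≤
        maxIdeal k N ^ ((N - 1) * r) * (fatIdeal e (fun _ => 1)) ^ r :=
  statement19_general k N n hN hn1 hn2 e he
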